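/- For every integer n ≥ 1 and every integer x, the operator Y acts tridiagonally on the basis functions φ_n: (Y φ_n(·;α))(x) = ν₁ · φ_{n+1}(x;α) + ν₂ · φ_n(x;α) + ν₃ · φ_{n−1}(x;α), where ν₁ = n²(n + β − N), ν₂ = −2n³ + (2(1+N) + α − β)n² + (−N − 1 + α(β − N))n, and ν₃ = n(N − n + 1)(α − n + 1). -/

import Mathlib

/-- Pochhammer symbol `(a)_k = a (a+1) ⋯ (a+k-1)`, with `(a)_0 = 1`. -/
noncomputable def poch (a : ℝ) (k : ℕ) : ℝ := ∏ i ∈ Finset.range k, (a + (i : ℝ))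

/-- Basis functions `φ_n(x;α) = (-x)_n / (α-x)_n`. -/
noncomputable def phi (α : ℝ) (n : ℕ) (x : ℤ) : ℝ :=
  poch (-(x : ℝ)) n / poch (α - (x : ℝ)) n

/-- Coefficients of the difference operator `Y`. -/
noncomputable def A1 (α β : ℝ) (N : ℕ) (x : ℝ) : ℝ := (x - α) * (x - (N : ℝ)) * (x + 1 - α)
noncomputable def A2 (α β : ℝ) (N : ℕ) (x : ℝ) : ℝ := x * (x - α) * (x + β - α - (N : ℝ))
noncomputable def A0 (α β : ℝ) (N : ℕ) (x : ℝ) : ℝ :=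
  (x - α) * (-2 * x ^ 2 + (2 * α - 1 + 2 * (N : ℝ) - β) * x - (N : ℝ) * (α - 1))

/-- The difference operator `Y`: `(Y f)(x) = A₁(x) f(x+1) + A₂(x) f(x-1) + A₀(x) f(x)`. -/
noncomputable def Yop (α β : ℝ) (N : ℕ) (f : ℤ → ℝ) (x : ℤ) : ℝ :=
  A1 α β N (x : ℝ) * f (x + 1) + A2 α β N (x : ℝ) * f (x - 1) + A0 α β N (x : ℝ) * f x

/-!
The three shift rules for `φ_n(x) = (-x)_n / (α-x)_n`, namely
`φ_{n+1}(x) = φ_n(x) (n-x)/(α-x+n)`, `φ_{n+1}(x+1) = φ_n(x) (x+1)/(x+1-α)` and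
`-x φ_n(x-1) = (α-x) φ_{n+1}(x)`, express every term on both sides as `φ_{n-1}(x)` times a
rational function of `x`; the third applies because `A₂(x)` carries the factor `x`, so no
division by `x` occurs. The denominators `α-x+n-1`, `α-x+n` and `α-x-1` are nonzero since
`α ∉ ℤ`, and what is left is a polynomial identity.
-/

lemma poch_succ_right (a : ℝ) (k : ℕ) : poch a (k + 1) = poch a k * (a + k) := by
  simp [poch, Finset.prod_range_succ]

lemma poch_succ_left (a : ℝ) (k : ℕ) : poch a (k + 1) = a * poch (a + 1) k := by
  rw [poch, Finset.prod_range_succ', mul_comm, poch]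
  push_cast
  simp only [add_zero, add_assoc, add_comm (1 : ℝ)]

lemma phi_succ (α : ℝ) (n : ℕ) (x : ℤ) :
    phi α (n + 1) x = phi α n x * ((-x + n) / (α - x + n)) := by
  rw [phi, phi, poch_succ_right, poch_succ_right, mul_div_mul_comm]

lemma phi_succ_add_one (α : ℝ) (n : ℕ) (x : ℤ) :
    phi α (n + 1) (x + 1) = phi α n x * ((-x - 1) / (α - x - 1)) := by
  rw [phi, phi, poch_succ_left, poch_succ_left]
  push_cast
  rw [show -((x : ℝ) + 1) + 1 = -x by ring, show α - (x + 1) + 1 = α - x by ring,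
    mul_div_mul_comm]
  ring

lemma neg_mul_phi_sub_one (α : ℝ) (n : ℕ) (x : ℤ) (hx : α - x ≠ 0) :
    -x * phi α n (x - 1) = (α - x) * phi α (n + 1) x := by
  rw [phi, phi, poch_succ_left (-(x : ℝ)), poch_succ_left (α - x)]
  push_cast
  rw [show -((x : ℝ) - 1) = -x + 1 by ring, show α - (x - 1) = α - x + 1 by ring]
  field_simp

theorem statement2_general (N : ℕ) (α β : ℝ) (hα : ∀ m : ℤ, α ≠ (m : ℝ))
    (n : ℕ) (hn : 1 ≤ n) (x : ℤ) :
    Yop α β N (phi α n) x =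
      ((n : ℝ) ^ 2 * ((n : ℝ) + β - (N : ℝ))) * phi α (n + 1) x
      + (-2 * (n : ℝ) ^ 3 + (2 * (1 + (N : ℝ)) + α - β) * (n : ℝ) ^ 2
          + (-(N : ℝ) - 1 + α * (β - (N : ℝ))) * (n : ℝ)) * phi α n x
      + ((n : ℝ) * ((N : ℝ) - (n : ℝ) + 1) * (α - (n : ℝ) + 1)) * phi α (n - 1) x := by
  obtain ⟨m, rfl⟩ : ∃ m, n = m + 1 := ⟨n - 1, by omega⟩
  have hne (c : ℤ) : α - x + c ≠ 0 := fun h ↦ hα (x - c) (by push_cast; linarith)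
  have hden₀ : α - x - 1 ≠ 0 := by convert hne (-1) using 1; push_cast; ring
  have hden₁ : α - x + m ≠ 0 := by exact_mod_cast hne m
  have hden₂ : α - x + (m + 1) ≠ 0 := by exact_mod_cast hne (m + 1)
  have hprev := neg_mul_phi_sub_one α (m + 1) x (by simpa using hne 0)
  rw [Yop, A1, A2, A0, phi_succ_add_one, Nat.add_sub_cancel]
  rw [phi_succ α (m + 1) x, phi_succ α m x] at hprev ⊢
  push_cast at hprev ⊢
  linear_combination (norm := (field_simp; ring)) (α - x) * (x + β - α - N) * hprev

theorem statement2 (N : ℕ) (hN : 0 < N) (α β : ℝ) (hα : ∀ m : ℤ, α ≠ (m : ℝ))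
    (n : ℕ) (hn : 1 ≤ n) (x : ℤ) :
    Yop α β N (phi α n) x =
      ((n : ℝ) ^ 2 * ((n : ℝ) + β - (N : ℝ))) * phi α (n + 1) x
      + (-2 * (n : ℝ) ^ 3 + (2 * (1 + (N : ℝ)) + α - β) * (n : ℝ) ^ 2
          + (-(N : ℝ) - 1 + α * (β - (N : ℝ))) * (n : ℝ)) * phi α n x
      + ((n : ℝ) * ((N : ℝ) - (n : ℝ) + 1) * (α - (n : ℝ) + 1)) * phi α (n - 1) x :=
  statement2_general N α β hα n hn x
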